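/- Let φ_n(t) = exp((n-2)√t/(n+√t)) for integers n ≥ 2 and φ_0(t) = φ_1(t) = 1. For all integers n ≥ 6, t ≥ 0, and 2 ≤ k ≤ n-2, one has C(n,k)^{-1} φ_{n-k}(t) φ_k(t)/φ_n(t) ≤ C(n,2)^{-1}. -/
import Mathlib


noncomputable def phi (n : ℕ) (t : ℝ) : ℝ :=
  if n ≤ 1 then 1 else Real.exp (((n : ℝ) - 2) * Real.sqrt t / ((n : ℝ) + Real.sqrt t))

noncomputable def Gf (s x : ℝ) : ℝ := (x - 2) * s / (x + s)

lemma Gf_mono (s a b : ℝ) (hs : 0 ≤ s) (ha : 2 ≤ a) (hab : a ≤ b) :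
    Gf s a ≤ Gf s b := by
  unfold Gf
  rw [div_le_div_iff₀ (by linarith) (by linarith)]
  nlinarith [mul_nonneg (mul_nonneg hs (by linarith : (0:ℝ) ≤ b - a)) (by linarith : (0:ℝ) ≤ s + 2)]

set_option maxHeartbeats 2000000 in
lemma Gf_step (s c d : ℝ) (hs : 0 ≤ s) (hc : 2 ≤ c) (hd : 2 * c + 2 ≤ d) :
    Real.exp (Gf s (d - c - 1) + Gf s (c + 1)) * (c + 1)
      ≤ Real.exp (Gf s (d - c) + Gf s c) * (d - c) := by
  have h1 : (0:ℝ) < c + s := by linarith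
  have h2 : (0:ℝ) < c + 1 + s := by linarith
  have h3 : (0:ℝ) < d - c - 1 + s := by linarith
  have h4 : (0:ℝ) < d - c + s := by linarith
  have h5 : (0:ℝ) < d - c := by linarith
  set A := Gf s (d - c) + Gf s c with hA
  set B := Gf s (d - c - 1) + Gf s (c + 1) with hB
  have hAB : A - B = s*(s+2)/((d-c-1+s)*(d-c+s)) - s*(s+2)/((c+s)*(c+1+s)) := by
    rw [hA, hB]
    unfold Gf
    field_simp
    ring
  have hkey : c + 1 ≤ (1 + (A - B)) * (d - c) := by
    rw [hAB, ← sub_nonneg]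
    have hexpand : (1 + (s*(s+2)/((d-c-1+s)*(d-c+s)) - s*(s+2)/((c+s)*(c+1+s)))) * (d - c) - (c + 1)
        = (((c+s)*(c+1+s)*((d-c-1+s)*(d-c+s)) + s*(s+2)*((c+s)*(c+1+s))
            - s*(s+2)*((d-c-1+s)*(d-c+s))) * (d-c)
           - (c+1) * ((c+s)*(c+1+s)*((d-c-1+s)*(d-c+s))))
          / ((c+s)*(c+1+s)*((d-c-1+s)*(d-c+s))) := by
      field_simp
      ring
    rw [hexpand]
    apply div_nonneg _ (by positivity)
    have hu : (0:ℝ) ≤ c - 2 := by linarith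
    have hv : (0:ℝ) ≤ d - 2*c - 2 := by linarith
    linarith [mul_nonneg (mul_nonneg (pow_nonneg hu 0) (pow_nonneg hv 0)) (pow_nonneg hs 1),
      mul_nonneg (mul_nonneg (pow_nonneg hu 0) (pow_nonneg hv 0)) (pow_nonneg hs 2),
      mul_nonneg (mul_nonneg (pow_nonneg hu 0) (pow_nonneg hv 0)) (pow_nonneg hs 3),
      mul_nonneg (mul_nonneg (pow_nonneg hu 0) (pow_nonneg hv 0)) (pow_nonneg hs 4),
      mul_nonneg (mul_nonneg (pow_nonneg hu 0) (pow_nonneg hv 1)) (pow_nonneg hs 0),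
      mul_nonneg (mul_nonneg (pow_nonneg hu 0) (pow_nonneg hv 1)) (pow_nonneg hs 1),
      mul_nonneg (mul_nonneg (pow_nonneg hu 0) (pow_nonneg hv 1)) (pow_nonneg hs 2),
      mul_nonneg (mul_nonneg (pow_nonneg hu 0) (pow_nonneg hv 1)) (pow_nonneg hs 3),
      mul_nonneg (mul_nonneg (pow_nonneg hu 0) (pow_nonneg hv 1)) (pow_nonneg hs 4),
      mul_nonneg (mul_nonneg (pow_nonneg hu 0) (pow_nonneg hv 2)) (pow_nonneg hs 0),
      mul_nonneg (mul_nonneg (pow_nonneg hu 0) (pow_nonneg hv 2)) (pow_nonneg hs 1),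
      mul_nonneg (mul_nonneg (pow_nonneg hu 0) (pow_nonneg hv 2)) (pow_nonneg hs 2),
      mul_nonneg (mul_nonneg (pow_nonneg hu 0) (pow_nonneg hv 3)) (pow_nonneg hs 0),
      mul_nonneg (mul_nonneg (pow_nonneg hu 0) (pow_nonneg hv 3)) (pow_nonneg hs 1),
      mul_nonneg (mul_nonneg (pow_nonneg hu 1) (pow_nonneg hv 0)) (pow_nonneg hs 0),
      mul_nonneg (mul_nonneg (pow_nonneg hu 1) (pow_nonneg hv 0)) (pow_nonneg hs 1),
      mul_nonneg (mul_nonneg (pow_nonneg hu 1) (pow_nonneg hv 0)) (pow_nonneg hs 2),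
      mul_nonneg (mul_nonneg (pow_nonneg hu 1) (pow_nonneg hv 0)) (pow_nonneg hs 3),
      mul_nonneg (mul_nonneg (pow_nonneg hu 1) (pow_nonneg hv 1)) (pow_nonneg hs 0),
      mul_nonneg (mul_nonneg (pow_nonneg hu 1) (pow_nonneg hv 1)) (pow_nonneg hs 1),
      mul_nonneg (mul_nonneg (pow_nonneg hu 1) (pow_nonneg hv 1)) (pow_nonneg hs 2),
      mul_nonneg (mul_nonneg (pow_nonneg hu 1) (pow_nonneg hv 1)) (pow_nonneg hs 3),
      mul_nonneg (mul_nonneg (pow_nonneg hu 1) (pow_nonneg hv 2)) (pow_nonneg hs 0),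
      mul_nonneg (mul_nonneg (pow_nonneg hu 1) (pow_nonneg hv 2)) (pow_nonneg hs 1),
      mul_nonneg (mul_nonneg (pow_nonneg hu 1) (pow_nonneg hv 2)) (pow_nonneg hs 2),
      mul_nonneg (mul_nonneg (pow_nonneg hu 1) (pow_nonneg hv 3)) (pow_nonneg hs 0),
      mul_nonneg (mul_nonneg (pow_nonneg hu 1) (pow_nonneg hv 3)) (pow_nonneg hs 1),
      mul_nonneg (mul_nonneg (pow_nonneg hu 2) (pow_nonneg hv 0)) (pow_nonneg hs 0),
      mul_nonneg (mul_nonneg (pow_nonneg hu 2) (pow_nonneg hv 0)) (pow_nonneg hs 1),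
      mul_nonneg (mul_nonneg (pow_nonneg hu 2) (pow_nonneg hv 0)) (pow_nonneg hs 2),
      mul_nonneg (mul_nonneg (pow_nonneg hu 2) (pow_nonneg hv 1)) (pow_nonneg hs 0),
      mul_nonneg (mul_nonneg (pow_nonneg hu 2) (pow_nonneg hv 1)) (pow_nonneg hs 1),
      mul_nonneg (mul_nonneg (pow_nonneg hu 2) (pow_nonneg hv 1)) (pow_nonneg hs 2),
      mul_nonneg (mul_nonneg (pow_nonneg hu 2) (pow_nonneg hv 2)) (pow_nonneg hs 0),
      mul_nonneg (mul_nonneg (pow_nonneg hu 2) (pow_nonneg hv 2)) (pow_nonneg hs 1),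
      mul_nonneg (mul_nonneg (pow_nonneg hu 2) (pow_nonneg hv 3)) (pow_nonneg hs 0),
      mul_nonneg (mul_nonneg (pow_nonneg hu 3) (pow_nonneg hv 0)) (pow_nonneg hs 0),
      mul_nonneg (mul_nonneg (pow_nonneg hu 3) (pow_nonneg hv 0)) (pow_nonneg hs 1),
      mul_nonneg (mul_nonneg (pow_nonneg hu 3) (pow_nonneg hv 1)) (pow_nonneg hs 0),
      mul_nonneg (mul_nonneg (pow_nonneg hu 3) (pow_nonneg hv 1)) (pow_nonneg hs 1),
      mul_nonneg (mul_nonneg (pow_nonneg hu 3) (pow_nonneg hv 2)) (pow_nonneg hs 0),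
      mul_nonneg (mul_nonneg (pow_nonneg hu 4) (pow_nonneg hv 0)) (pow_nonneg hs 0),
      mul_nonneg (mul_nonneg (pow_nonneg hu 4) (pow_nonneg hv 1)) (pow_nonneg hs 0)]
  have hBA : B + (A - B) = A := by ring
  calc Real.exp B * (c + 1)
      ≤ Real.exp B * ((1 + (A - B)) * (d - c)) :=
        mul_le_mul_of_nonneg_left hkey (Real.exp_pos B).le
    _ ≤ Real.exp B * (Real.exp (A - B) * (d - c)) := by
        apply mul_le_mul_of_nonneg_left _ (Real.exp_pos B).le
        apply mul_le_mul_of_nonneg_right _ h5.le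
        have := Real.add_one_le_exp (A - B)
        linarith
    _ = Real.exp A * (d - c) := by rw [← mul_assoc, ← Real.exp_add, hBA]

lemma Gf_ind (s : ℝ) (hs : 0 ≤ s) (n : ℕ) :
    ∀ j : ℕ, 2 ≤ j → 2 * j ≤ n →
      (n.choose 2 : ℝ) * Real.exp (Gf s ((n : ℝ) - j) + Gf s j)
        ≤ (n.choose j : ℝ) * Real.exp (Gf s ((n : ℝ) - 2)) := by
  intro j hj
  induction j, hj using Nat.le_induction with
  | base =>
    intro h2
    have h2' : Gf s ((2:ℕ):ℝ) = 0 := by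
      norm_num [Gf]
    rw [h2', add_zero]
    push_cast
    exact le_rfl
  | succ j hj ih =>
    intro hjn
    have h2j : 2 * j ≤ n := by omega
    have IH := ih h2j
    have hc : (2:ℝ) ≤ (j:ℝ) := by exact_mod_cast hj
    have hd : 2 * (j:ℝ) + 2 ≤ (n:ℝ) := by
      have : ((2 * (j+1) : ℕ) : ℝ) ≤ (n:ℝ) := by exact_mod_cast hjn
      push_cast at this
      linarith
    have st := Gf_step s (j:ℝ) (n:ℝ) hs hc hd
    have hjn' : j ≤ n := by omega
    have hch : ((n.choose (j+1)):ℝ) * ((j:ℝ) + 1) = (n.choose j : ℝ) * ((n:ℝ) - (j:ℝ)) := by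
      have h := Nat.choose_succ_right_eq n j
      have h' := congrArg (fun x : ℕ => (x : ℝ)) h
      push_cast [Nat.cast_sub hjn'] at h'
      exact h'
    have hjpos : (0:ℝ) < (j:ℝ) + 1 := by positivity
    have hnj : (0:ℝ) ≤ (n:ℝ) - (j:ℝ) := by linarith
    have hC2 : (0:ℝ) ≤ (n.choose 2 : ℝ) := by positivity
    apply le_of_mul_le_mul_right _ hjpos
    have hcast : ((j:ℕ)+1 : ℕ) = j + 1 := rfl
    have hgoal1 : (n:ℝ) - ((j+1 : ℕ):ℝ) = (n:ℝ) - (j:ℝ) - 1 := by push_cast; ring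
    have hgoal2 : (((j+1 : ℕ)):ℝ) = (j:ℝ) + 1 := by push_cast; ring
    rw [hgoal1, hgoal2]
    calc (n.choose 2 : ℝ) * Real.exp (Gf s ((n:ℝ) - (j:ℝ) - 1) + Gf s ((j:ℝ)+1)) * ((j:ℝ)+1)
        = (n.choose 2 : ℝ) * (Real.exp (Gf s ((n:ℝ) - (j:ℝ) - 1) + Gf s ((j:ℝ)+1)) * ((j:ℝ)+1)) := by
          ring
      _ ≤ (n.choose 2 : ℝ) * (Real.exp (Gf s ((n:ℝ) - (j:ℝ)) + Gf s (j:ℝ)) * ((n:ℝ) - (j:ℝ))) :=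
          mul_le_mul_of_nonneg_left st hC2
      _ = ((n.choose 2 : ℝ) * Real.exp (Gf s ((n:ℝ) - (j:ℝ)) + Gf s (j:ℝ))) * ((n:ℝ) - (j:ℝ)) := by
          ring
      _ ≤ ((n.choose j : ℝ) * Real.exp (Gf s ((n:ℝ) - 2))) * ((n:ℝ) - (j:ℝ)) :=
          mul_le_mul_of_nonneg_right IH hnj
      _ = ((n.choose j : ℝ) * ((n:ℝ) - (j:ℝ))) * Real.exp (Gf s ((n:ℝ) - 2)) := by ring
      _ = ((n.choose (j+1) : ℝ) * ((j:ℝ)+1)) * Real.exp (Gf s ((n:ℝ) - 2)) := by rw [hch]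
      _ = (n.choose (j+1) : ℝ) * Real.exp (Gf s ((n:ℝ) - 2)) * ((j:ℝ)+1) := by ring

theorem phi_middle_term_le (n k : ℕ) (hn : 6 ≤ n) (hk : 2 ≤ k) (hkn : k ≤ n - 2)
    (t : ℝ) (ht : 0 ≤ t) :
    ((n.choose k : ℝ))⁻¹ * (phi (n - k) t * phi k t / phi n t) ≤
      ((n.choose 2 : ℝ))⁻¹ := by
  set s := Real.sqrt t with hsdef
  have hs : 0 ≤ s := Real.sqrt_nonneg t
  have hkn' : k + 2 ≤ n := by omega
  have hknle : k ≤ n := by omega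
  have hnk2 : 2 ≤ n - k := by omega
  have hphi : ∀ m : ℕ, 2 ≤ m → phi m t = Real.exp (Gf s (m : ℝ)) := by
    intro m hm
    rw [phi, if_neg (by omega)]
    rfl
  have hcastnk : (((n - k : ℕ)) : ℝ) = (n:ℝ) - (k:ℝ) := by
    push_cast [Nat.cast_sub hknle]
    ring
  -- main inequality
  have hmain : (n.choose 2 : ℝ) * Real.exp (Gf s ((n:ℝ) - (k:ℝ)) + Gf s (k:ℝ))
      ≤ (n.choose k : ℝ) * Real.exp (Gf s ((n:ℝ) - 2)) := by
    rcases le_total k (n - k) with h | h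
    · have h2k : 2 * k ≤ n := by omega
      exact Gf_ind s hs n k hk h2k
    · have hj2 : 2 ≤ n - k := hnk2
      have h2j : 2 * (n - k) ≤ n := by omega
      have hind := Gf_ind s hs n (n - k) hj2 h2j
      rw [hcastnk] at hind
      have hsymm : n.choose (n - k) = n.choose k := Nat.choose_symm hknle
      rw [hsymm] at hind
      have harg : (n:ℝ) - ((n:ℝ) - (k:ℝ)) = (k:ℝ) := by ring
      rw [harg] at hind
      calc (n.choose 2 : ℝ) * Real.exp (Gf s ((n:ℝ) - (k:ℝ)) + Gf s (k:ℝ))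
          = (n.choose 2 : ℝ) * Real.exp (Gf s (k:ℝ) + Gf s ((n:ℝ) - (k:ℝ))) := by
            rw [add_comm (Gf s ((n:ℝ) - (k:ℝ)))]
        _ ≤ (n.choose k : ℝ) * Real.exp (Gf s ((n:ℝ) - 2)) := hind
  have hmono : Gf s ((n:ℝ) - 2) ≤ Gf s (n:ℝ) := by
    apply Gf_mono s _ _ hs
    · have : (6:ℝ) ≤ (n:ℝ) := by exact_mod_cast hn
      linarith
    · linarith
  have hCk : (0:ℝ) < (n.choose k : ℝ) := by
    exact_mod_cast Nat.choose_pos hknle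
  have hC2 : (0:ℝ) < (n.choose 2 : ℝ) := by
    exact_mod_cast Nat.choose_pos (by omega : 2 ≤ n)
  have hmain2 : (n.choose 2 : ℝ) * Real.exp (Gf s ((n:ℝ) - (k:ℝ)) + Gf s (k:ℝ))
      ≤ (n.choose k : ℝ) * Real.exp (Gf s (n:ℝ)) := by
    calc (n.choose 2 : ℝ) * Real.exp (Gf s ((n:ℝ) - (k:ℝ)) + Gf s (k:ℝ))
        ≤ (n.choose k : ℝ) * Real.exp (Gf s ((n:ℝ) - 2)) := hmain
      _ ≤ (n.choose k : ℝ) * Real.exp (Gf s (n:ℝ)) := by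
          apply mul_le_mul_of_nonneg_left (Real.exp_le_exp.2 hmono) hCk.le
  rw [hphi (n - k) hnk2, hphi k hk, hphi n (by omega), hcastnk, ← Real.exp_add]
  rw [inv_mul_eq_div, div_div, ← one_div ((n.choose 2 : ℝ))]
  rw [div_le_div_iff₀ (by positivity) hC2]
  calc Real.exp (Gf s ((n:ℝ) - (k:ℝ)) + Gf s (k:ℝ)) * (n.choose 2 : ℝ)
      = (n.choose 2 : ℝ) * Real.exp (Gf s ((n:ℝ) - (k:ℝ)) + Gf s (k:ℝ)) := by ring
    _ ≤ (n.choose k : ℝ) * Real.exp (Gf s (n:ℝ)) := hmain2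
    _ = 1 * (Real.exp (Gf s (n:ℝ)) * (n.choose k : ℝ)) := by ring
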